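/- arXiv:1206.5478 — 3 statements merged into one kernel-verified Lean document; each statement's English description precedes it below -/
import Mathlib

section
/- Let a < p < b and let f : ℝ → ℝ be differentiable on [a,b], strictly convex on [a,p] and strictly concave on [p,b]. If x_l ∈ (a,b] satisfies f'(x_l) = (f(x_l) − f(a))/(x_l − a) and x_r ∈ [a,b) satisfies f'(x_r) = (f(b) − f(x_r))/(b − x_r), then a ≤ x_r < p < x_l ≤ b; in particular x_r < x_l. -/
/-!
On `[a, p]` strict convexity makes the derivative at `x` strictly larger than the slope of the
chord from `a` to `x`, so no left tangency point lies in `[a, p]`; symmetrically, on `[p, b]`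
strict concavity makes the derivative at `x` strictly larger than the slope of the chord from
`x` to `b`, so no right tangency point lies in `[p, b]`.
-/

section

variable {s : Set ℝ} {f : ℝ → ℝ} {x y : ℝ}

theorem StrictConvexOn.deriv_ne_chord_slope (hf : StrictConvexOn ℝ s f) (hx : x ∈ s)
    (hy : y ∈ s) (hxy : x < y) (hd : DifferentiableAt ℝ f y) :
    deriv f y ≠ (f y - f x) / (y - x) := by
  rw [← slope_def_field]
  exact (hf.slope_lt_deriv hx hy hxy hd).ne'

theorem StrictConcaveOn.deriv_ne_chord_slope (hf : StrictConcaveOn ℝ s f) (hx : x ∈ s)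
    (hy : y ∈ s) (hxy : x < y) (hd : DifferentiableAt ℝ f x) :
    deriv f x ≠ (f y - f x) / (y - x) := by
  rw [← slope_def_field]
  exact (hf.slope_lt_deriv hx hy hxy hd).ne'

end

/-- For `f` differentiable on `[a,b]`, strictly convex on `[a,p]` and strictly concave
on `[p,b]` (with `a < p < b`), any left tangency point `x_l ∈ (a,b]` and any right
tangency point `x_r ∈ [a,b)` satisfy `a ≤ x_r < p < x_l ≤ b`; in particular `x_r < x_l`. -/
theorem tangency_points_straddle_inflection (a b p : ℝ) (hap : a < p) (hpb : p < b)
    (f : ℝ → ℝ)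
    (hd : ∀ x ∈ Set.Icc a b, DifferentiableAt ℝ f x)
    (hconv : StrictConvexOn ℝ (Set.Icc a p) f)
    (hconc : StrictConcaveOn ℝ (Set.Icc p b) f)
    (xl xr : ℝ) (hxl : xl ∈ Set.Ioc a b) (hxr : xr ∈ Set.Ico a b)
    (heql : deriv f xl = (f xl - f a) / (xl - a))
    (heqr : deriv f xr = (f b - f xr) / (b - xr)) :
    a ≤ xr ∧ xr < p ∧ p < xl ∧ xl ≤ b ∧ xr < xl := by
  obtain ⟨hal, hlb⟩ := hxl
  obtain ⟨har, hrb⟩ := hxr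
  have hpl : p < xl := lt_of_not_ge fun hle =>
    hconv.deriv_ne_chord_slope ⟨le_rfl, hap.le⟩ ⟨hal.le, hle⟩ hal (hd xl ⟨hal.le, hlb⟩) heql
  have hrp : xr < p := lt_of_not_ge fun hle =>
    hconc.deriv_ne_chord_slope ⟨hle, hrb.le⟩ ⟨hpb.le, le_rfl⟩ hrb (hd xr ⟨har, hrb.le⟩) heqr
  exact ⟨har, hrp, hpl, hlb, hrp.trans hpl⟩
end

section
/- Let a < p < b, let f : ℝ → ℝ be twice differentiable on [a,b] with f''(x) > 0 for x ∈ (a,p) and f''(x) < 0 for x ∈ (p,b), and suppose x_l ∈ (p,b) satisfies f(x_l) − f(a) − f'(x_l)·(x_l − a) = 0. Define S_l(x) = ∫_a^x f(t) dt − ((f(a)+f(x))/2)·(x−a). Then S_l is strictly decreasing on [a, x_l] and strictly increasing on [x_l, b]; in particular x_l is the unique minimizer of S_l on [a,b]. -/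
/-!
Differentiating, `S_l' = g / 2` with `g x = f x - f a - f' x * (x - a)` (`g = tangentDefect f a`),
and `g' x = -f'' x * (x - a)`. So `g` strictly decreases on `[a, p]` and strictly increases on
`[p, b]`; as `g a = g x_l = 0`, `g < 0` on `(a, x_l)` and `g > 0` on `(x_l, b)`, which gives the
monotonicity of `S_l`.
-/

open Set intervalIntegral

noncomputable def leftSurface (f : ℝ → ℝ) (a x : ℝ) : ℝ :=
  (∫ t in a..x, f t) - (f a + f x) / 2 * (x - a)

/-- `tangentDefect f a x = 0` says that the tangent to the graph of `f` at `x` passes through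
`(a, f a)`. -/
noncomputable def tangentDefect (f : ℝ → ℝ) (a x : ℝ) : ℝ :=
  f x - f a - deriv f x * (x - a)

section Order

variable {α β : Type*} [LinearOrder α] [Preorder β] {g : α → β} {a p m b x : α}

theorem StrictAntiOn.apply_lt_of_strictMonoOn (hanti : StrictAntiOn g (Icc a m))
    (hmono : StrictMonoOn g (Icc m b)) (hx : x ∈ Icc a b) (hne : x ≠ m) : g m < g x := by
  rcases hne.lt_or_gt with hxm | hmx
  · exact hanti ⟨hx.1, hxm.le⟩ ⟨hx.1.trans hxm.le, le_rfl⟩ hxm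
  · exact hmono ⟨le_rfl, hmx.le.trans hx.2⟩ ⟨hmx.le, hx.2⟩ hmx

theorem StrictAntiOn.apply_lt_of_strictMonoOn_of_eq (hanti : StrictAntiOn g (Icc a p))
    (hmono : StrictMonoOn g (Icc p m)) (hpm : p ≤ m) (hx : x ∈ Ioo a m) {c : β}
    (ha : g a = c) (hm : g m = c) : g x < c := by
  rcases le_or_gt x p with hxp | hpx
  · exact ha ▸ hanti ⟨le_rfl, hx.1.le.trans hxp⟩ ⟨hx.1.le, hxp⟩ hx.1
  · exact hm ▸ hmono ⟨hpx.le, hx.2.le⟩ ⟨hpm, le_rfl⟩ hx.2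

end Order

section

variable {f : ℝ → ℝ} {a b c d p x : ℝ}

@[simp]
theorem tangentDefect_self (f : ℝ → ℝ) (a : ℝ) : tangentDefect f a a = 0 := by
  simp [tangentDefect]

theorem hasDerivAt_tangentDefect (hf : DifferentiableAt ℝ f x)
    (hf' : DifferentiableAt ℝ (deriv f) x) :
    HasDerivAt (tangentDefect f a) (-(deriv (deriv f) x * (x - a))) x := by
  have h := (hf.hasDerivAt.sub_const (f a)).sub
    (hf'.hasDerivAt.mul ((hasDerivAt_id x).sub_const a))
  exact h.congr_deriv (by simp only [id_eq]; ring)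

theorem strictAntiOn_tangentDefect (hf : ∀ x ∈ Icc a p, DifferentiableAt ℝ f x)
    (hf' : ∀ x ∈ Icc a p, DifferentiableAt ℝ (deriv f) x)
    (hpos : ∀ x ∈ Ioo a p, 0 < deriv (deriv f) x) :
    StrictAntiOn (tangentDefect f a) (Icc a p) := by
  refine strictAntiOn_of_hasDerivWithinAt_neg (f' := fun x ↦ -(deriv (deriv f) x * (x - a)))
    (convex_Icc a p)
    (fun x hx ↦ (hasDerivAt_tangentDefect (hf x hx) (hf' x hx)).continuousAt.continuousWithinAt)
    (fun x hx ↦ ?_) fun x hx ↦ ?_ <;> rw [interior_Icc] at hx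
  · exact (hasDerivAt_tangentDefect (hf x (Ioo_subset_Icc_self hx))
      (hf' x (Ioo_subset_Icc_self hx))).hasDerivWithinAt
  · exact neg_neg_of_pos (mul_pos (hpos x hx) (sub_pos.2 hx.1))

theorem strictMonoOn_tangentDefect (hap : a ≤ p)
    (hf : ∀ x ∈ Icc p b, DifferentiableAt ℝ f x)
    (hf' : ∀ x ∈ Icc p b, DifferentiableAt ℝ (deriv f) x)
    (hneg : ∀ x ∈ Ioo p b, deriv (deriv f) x < 0) :
    StrictMonoOn (tangentDefect f a) (Icc p b) := by
  refine strictMonoOn_of_hasDerivWithinAt_pos (f' := fun x ↦ -(deriv (deriv f) x * (x - a)))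
    (convex_Icc p b)
    (fun x hx ↦ (hasDerivAt_tangentDefect (hf x hx) (hf' x hx)).continuousAt.continuousWithinAt)
    (fun x hx ↦ ?_) fun x hx ↦ ?_ <;> rw [interior_Icc] at hx
  · exact (hasDerivAt_tangentDefect (hf x (Ioo_subset_Icc_self hx))
      (hf' x (Ioo_subset_Icc_self hx))).hasDerivWithinAt
  · exact neg_pos.2 (mul_neg_of_neg_of_pos (hneg x hx) (sub_pos.2 (hap.trans_lt hx.1)))

theorem continuousOn_leftSurface (hf : ContinuousOn f (Icc a b)) :
    ContinuousOn (leftSurface f a) (Icc a b) := by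
  have hprim : ContinuousOn (fun x ↦ ∫ t in a..x, f t) (Icc a b) :=
    (continuousOn_primitive hf.integrableOn_Icc).congr fun x hx ↦ integral_of_le hx.1
  exact hprim.sub (((continuousOn_const.add hf).div_const 2).mul
    (continuousOn_id.sub continuousOn_const))

theorem hasDerivAt_leftSurface (hf : ContinuousOn f (Icc a b)) (hx : x ∈ Ioo a b)
    (hfx : DifferentiableAt ℝ f x) :
    HasDerivAt (leftSurface f a) (tangentDefect f a x / 2) x := by
  have hint : IntervalIntegrable f MeasureTheory.volume a x :=
    (hf.mono (Icc_subset_Icc_right hx.2.le)).intervalIntegrable_of_Icc hx.1.le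
  have hprim : HasDerivAt (fun u ↦ ∫ t in a..u, f t) (f x) x :=
    integral_hasDerivAt_right hint
      ((hf.mono Ioo_subset_Icc_self).stronglyMeasurableAtFilter isOpen_Ioo x hx) hfx.continuousAt
  have hchord := ((hasDerivAt_const x (f a)).add hfx.hasDerivAt).div_const 2 |>.mul
    ((hasDerivAt_id x).sub_const a)
  exact (hprim.sub hchord).congr_deriv (by simp only [tangentDefect, id_eq, Pi.add_apply]; ring)

theorem strictAntiOn_leftSurface (hf : ∀ x ∈ Icc a b, DifferentiableAt ℝ f x)
    (hcd : Icc c d ⊆ Icc a b) (hneg : ∀ x ∈ Ioo c d, tangentDefect f a x < 0) :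
    StrictAntiOn (leftSurface f a) (Icc c d) := by
  have hfc : ContinuousOn f (Icc a b) := fun x hx ↦ (hf x hx).continuousAt.continuousWithinAt
  refine strictAntiOn_of_hasDerivWithinAt_neg (f' := fun x ↦ tangentDefect f a x / 2)
    (convex_Icc c d) ((continuousOn_leftSurface hfc).mono hcd) (fun x hx ↦ ?_) fun x hx ↦ ?_
  · have hx' : x ∈ Ioo a b := by simpa only [interior_Icc] using interior_mono hcd hx
    exact (hasDerivAt_leftSurface hfc hx' (hf x (Ioo_subset_Icc_self hx'))).hasDerivWithinAt
  · rw [interior_Icc] at hx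
    exact div_neg_of_neg_of_pos (hneg x hx) two_pos

theorem strictMonoOn_leftSurface (hf : ∀ x ∈ Icc a b, DifferentiableAt ℝ f x)
    (hcd : Icc c d ⊆ Icc a b) (hpos : ∀ x ∈ Ioo c d, 0 < tangentDefect f a x) :
    StrictMonoOn (leftSurface f a) (Icc c d) := by
  have hfc : ContinuousOn f (Icc a b) := fun x hx ↦ (hf x hx).continuousAt.continuousWithinAt
  refine strictMonoOn_of_hasDerivWithinAt_pos (f' := fun x ↦ tangentDefect f a x / 2)
    (convex_Icc c d) ((continuousOn_leftSurface hfc).mono hcd) (fun x hx ↦ ?_) fun x hx ↦ ?_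
  · have hx' : x ∈ Ioo a b := by simpa only [interior_Icc] using interior_mono hcd hx
    exact (hasDerivAt_leftSurface hfc hx' (hf x (Ioo_subset_Icc_self hx'))).hasDerivWithinAt
  · rw [interior_Icc] at hx
    exact half_pos (hpos x hx)

end

/-- For a convex/concave `f` on `[a,b]` with inflection point `p` (`f'' > 0` on `(a,p)`,
`f'' < 0` on `(p,b)`) and left tangency point `x_l ∈ (p,b)`
(i.e. `f(x_l) − f(a) − f'(x_l)·(x_l − a) = 0`), the left-surface
`S_l(x) = ∫_a^x f(t) dt − ((f(a)+f(x))/2)·(x−a)` is strictly decreasing on `[a, x_l]`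
and strictly increasing on `[x_l, b]`; in particular `x_l` is the unique minimizer of
`S_l` on `[a,b]`. -/
theorem left_surface_min_at_left_tangency (a b p xl : ℝ) (hap : a < p) (hpb : p < b)
    (f : ℝ → ℝ)
    (hd1 : ∀ x ∈ Set.Icc a b, DifferentiableAt ℝ f x)
    (hd2 : ∀ x ∈ Set.Icc a b, DifferentiableAt ℝ (deriv f) x)
    (hpos : ∀ x ∈ Set.Ioo a p, 0 < deriv (deriv f) x)
    (hneg : ∀ x ∈ Set.Ioo p b, deriv (deriv f) x < 0)
    (hxl : xl ∈ Set.Ioo p b)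
    (heq : f xl - f a - deriv f xl * (xl - a) = 0) :
    StrictAntiOn (fun x => (∫ t in a..x, f t) - ((f a + f x) / 2) * (x - a))
      (Set.Icc a xl) ∧
    StrictMonoOn (fun x => (∫ t in a..x, f t) - ((f a + f x) / 2) * (x - a))
      (Set.Icc xl b) ∧
    ∀ x ∈ Set.Icc a b, x ≠ xl →
      ((∫ t in a..xl, f t) - ((f a + f xl) / 2) * (xl - a)) <
        ((∫ t in a..x, f t) - ((f a + f x) / 2) * (x - a)) := by
  obtain ⟨hpxl, hxlb⟩ := hxl
  have hIcc_ap : Icc a p ⊆ Icc a b := Icc_subset_Icc_right hpb.le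
  have hIcc_pb : Icc p b ⊆ Icc a b := Icc_subset_Icc_left hap.le
  have hg_anti : StrictAntiOn (tangentDefect f a) (Icc a p) :=
    strictAntiOn_tangentDefect (fun x hx ↦ hd1 x (hIcc_ap hx)) (fun x hx ↦ hd2 x (hIcc_ap hx))
      hpos
  have hg_mono : StrictMonoOn (tangentDefect f a) (Icc p b) :=
    strictMonoOn_tangentDefect hap.le (fun x hx ↦ hd1 x (hIcc_pb hx))
      (fun x hx ↦ hd2 x (hIcc_pb hx)) hneg
  have hS_anti : StrictAntiOn (leftSurface f a) (Icc a xl) :=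
    strictAntiOn_leftSurface hd1 (Icc_subset_Icc_right hxlb.le) fun x hx ↦
      hg_anti.apply_lt_of_strictMonoOn_of_eq (hg_mono.mono (Icc_subset_Icc_right hxlb.le))
        hpxl.le hx (tangentDefect_self f a) heq
  have hS_mono : StrictMonoOn (leftSurface f a) (Icc xl b) :=
    strictMonoOn_leftSurface hd1 (Icc_subset_Icc_left (hap.trans hpxl).le) fun x hx ↦
      heq ▸ hg_mono ⟨hpxl.le, hxlb.le⟩ ⟨(hpxl.trans hx.1).le, hx.2.le⟩ hx.1
  exact ⟨hS_anti, hS_mono, fun x hx hne ↦ hS_anti.apply_lt_of_strictMonoOn hS_mono hx hne⟩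
end

section
/- For each n ≥ 1 let a = x₀⁽ⁿ⁾ < x₁⁽ⁿ⁾ < ⋯ < x_n⁽ⁿ⁾ = b be a partition of [a,b] with mesh λ(n) = max_i (x_{i+1}⁽ⁿ⁾ − x_i⁽ⁿ⁾), let f : ℝ → ℝ, and on a probability space let ε₀⁽ⁿ⁾, …, ε_n⁽ⁿ⁾ be independent real random variables in L² with mean 0 and variance σ². Set φ_i⁽ⁿ⁾ = f(x_i⁽ⁿ⁾) + ε_i⁽ⁿ⁾ and let T_n(φ) and T_n(f) denote the total trapezoidal sums of the errored and true data over the n-th partition. If n·λ(n)² → 0 as n → ∞, then E[(T_n(φ) − T_n(f))²] → 0; i.e. the trapezoidal estimator is a consistent (L²) estimator of the trapezoidal sum of the true data. -/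
/-!
By linearity `T_n(φ) − T_n(f) = T_n(ε)`. Splitting each trapezoid into its left and right halves
writes `T_n(ε) = A + B`, where `A` and `B` are sums of independent centred errors with weights
`Δᵢ / 2`; this sidesteps the correlation between neighbouring trapezoids, which share a node.
Hence `E[A²] = E[B²] = σ² ∑ Δᵢ² / 4` and `E[(A + B)²] ≤ 2 E[A²] + 2 E[B²] = σ² ∑ Δᵢ² ≤ σ² n λ(n)²`.
-/

open MeasureTheory ProbabilityTheory Filter

noncomputable def trapezoidSum {n : ℕ} (x y : Fin (n + 1) → ℝ) : ℝ :=
  ∑ i : Fin n, (y i.castSucc + y i.succ) / 2 * (x i.succ - x i.castSucc)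

theorem trapezoidSum_add_sub {n : ℕ} (x y e : Fin (n + 1) → ℝ) :
    trapezoidSum x (y + e) - trapezoidSum x y = trapezoidSum x e := by
  simp only [trapezoidSum, ← Finset.sum_sub_distrib, Pi.add_apply]
  exact Finset.sum_congr rfl fun i _ => by ring

section

variable {Ω : Type*} [MeasurableSpace Ω] {μ : Measure Ω}

theorem integral_sq_add_le {A B : Ω → ℝ} (hA : MemLp A 2 μ) (hB : MemLp B 2 μ) :
    ∫ ω, (A ω + B ω) ^ 2 ∂μ ≤ 2 * ∫ ω, A ω ^ 2 ∂μ + 2 * ∫ ω, B ω ^ 2 ∂μ := by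
  have hint : Integrable (fun ω => 2 * A ω ^ 2 + 2 * B ω ^ 2) μ :=
    (hA.integrable_sq.const_mul 2).add (hB.integrable_sq.const_mul 2)
  calc ∫ ω, (A ω + B ω) ^ 2 ∂μ ≤ ∫ ω, (2 * A ω ^ 2 + 2 * B ω ^ 2) ∂μ :=
        integral_mono_of_nonneg (.of_forall fun _ => sq_nonneg _) hint
          (.of_forall fun ω => by nlinarith [sq_nonneg (A ω - B ω)])
    _ = 2 * ∫ ω, A ω ^ 2 ∂μ + 2 * ∫ ω, B ω ^ 2 ∂μ := by
        rw [integral_add (hA.integrable_sq.const_mul 2) (hB.integrable_sq.const_mul 2),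
          integral_const_mul, integral_const_mul]

variable [IsProbabilityMeasure μ]

theorem integral_sq_sum_mul_of_iIndepFun {ι : Type*} [Fintype ι] {X : ι → Ω → ℝ}
    (hX : ∀ i, MemLp (X i) 2 μ) (hind : iIndepFun X μ) (hmean : ∀ i, ∫ ω, X i ω ∂μ = 0)
    (c : ι → ℝ) :
    ∫ ω, (∑ i, c i * X i ω) ^ 2 ∂μ = ∑ i, c i ^ 2 * variance (X i) μ := by
  have hcX : ∀ i, MemLp (fun ω => c i * X i ω) 2 μ := fun i => (hX i).const_mul _
  have hS : MemLp (fun ω => ∑ i, c i * X i ω) 2 μ := memLp_finsetSum _ fun i _ => hcX i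
  have hSmean : ∫ ω, ∑ i, c i * X i ω ∂μ = 0 := by
    rw [integral_finsetSum _ fun i _ => ((hX i).integrable one_le_two).const_mul _]
    simp [integral_const_mul, hmean]
  have hcind : iIndepFun (fun i ω => c i * X i ω) μ :=
    hind.comp (fun i y => c i * y) fun i => measurable_const_mul _
  rw [← variance_of_integral_eq_zero hS.aemeasurable hSmean]
  have hsum : (fun ω => ∑ i, c i * X i ω) = ∑ i, fun ω => c i * X i ω := by
    funext ω; simp
  rw [hsum, IndepFun.variance_sum (fun i _ => hcX i) fun i _ j _ hij => hcind.indepFun hij]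
  simp only [variance_const_mul]

theorem integral_sq_trapezoidSum_le {n : ℕ} {x : Fin (n + 1) → ℝ} (hx : Monotone x)
    {l : ℝ} (hl : ∀ i : Fin n, x i.succ - x i.castSucc ≤ l)
    {ε : Fin (n + 1) → Ω → ℝ} (hmem : ∀ i, MemLp (ε i) 2 μ) (hind : iIndepFun ε μ)
    (hmean : ∀ i, ∫ ω, ε i ω ∂μ = 0) {σ : ℝ} (hvar : ∀ i, variance (ε i) μ = σ ^ 2) :
    ∫ ω, trapezoidSum x (fun j => ε j ω) ^ 2 ∂μ ≤ σ ^ 2 * (n * l ^ 2) := by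
  set Δ : Fin n → ℝ := fun i => x i.succ - x i.castSucc
  have hΔ : ∀ i, 0 ≤ Δ i := fun i => sub_nonneg.mpr (hx Fin.castSucc_lt_succ.le)
  set A : Ω → ℝ := fun ω => ∑ i : Fin n, Δ i / 2 * ε i.castSucc ω
  set B : Ω → ℝ := fun ω => ∑ i : Fin n, Δ i / 2 * ε i.succ ω
  have hsplit : ∀ ω, trapezoidSum x (fun j => ε j ω) = A ω + B ω := fun ω => by
    simp only [trapezoidSum, A, B, Δ, ← Finset.sum_add_distrib]
    exact Finset.sum_congr rfl fun i _ => by ring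
  have hA : ∫ ω, A ω ^ 2 ∂μ = ∑ i : Fin n, (Δ i / 2) ^ 2 * σ ^ 2 := by
    simp only [A, integral_sq_sum_mul_of_iIndepFun (fun i => hmem _)
      (hind.precomp (Fin.castSucc_injective n)) (fun i => hmean _), hvar]
  have hB : ∫ ω, B ω ^ 2 ∂μ = ∑ i : Fin n, (Δ i / 2) ^ 2 * σ ^ 2 := by
    simp only [B, integral_sq_sum_mul_of_iIndepFun (fun i => hmem _)
      (hind.precomp (Fin.succ_injective n)) (fun i => hmean _), hvar]
  have hmesh : ∑ i : Fin n, Δ i ^ 2 ≤ n * l ^ 2 := by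
    simpa using Finset.sum_le_card_nsmul Finset.univ (fun i => Δ i ^ 2) (l ^ 2)
      fun i _ => pow_le_pow_left₀ (hΔ i) (hl i) 2
  calc ∫ ω, trapezoidSum x (fun j => ε j ω) ^ 2 ∂μ = ∫ ω, (A ω + B ω) ^ 2 ∂μ := by
        simp only [hsplit]
    _ ≤ 2 * ∫ ω, A ω ^ 2 ∂μ + 2 * ∫ ω, B ω ^ 2 ∂μ :=
        integral_sq_add_le (memLp_finsetSum _ fun i _ => (hmem _).const_mul _)
          (memLp_finsetSum _ fun i _ => (hmem _).const_mul _)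
    _ = σ ^ 2 * ∑ i : Fin n, Δ i ^ 2 := by
        rw [hA, hB, Finset.mul_sum, Finset.mul_sum, ← Finset.sum_add_distrib]
        exact Finset.sum_congr rfl fun i _ => by ring
    _ ≤ σ ^ 2 * (n * l ^ 2) := mul_le_mul_of_nonneg_left hmesh (sq_nonneg σ)

end

theorem trapezoid_consistent_general {Ω : Type*} [MeasureSpace Ω]
    [IsProbabilityMeasure (volume : Measure Ω)]
    (f : ℝ → ℝ) (σ : ℝ)
    (x : (n : ℕ) → Fin (n + 1) → ℝ)
    (hmono : ∀ n, 1 ≤ n → StrictMono (x n))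
    (ε : (n : ℕ) → Fin (n + 1) → Ω → ℝ)
    (hmem : ∀ n i, MemLp (ε n i) 2)
    (hindep : ∀ n, iIndepFun (ε n))
    (hmean : ∀ n i, ∫ ω, ε n i ω = 0)
    (hvar : ∀ n i, variance (ε n i) volume = σ ^ 2)
    (lam : ℕ → ℝ)
    (hlam : ∀ n (hn : 0 < n), lam n =
      Finset.univ.sup' (Finset.univ_nonempty_iff.mpr ⟨⟨0, hn⟩⟩)
        fun i : Fin n => x n i.succ - x n i.castSucc)
    (hmesh : Tendsto (fun n : ℕ => (n : ℝ) * lam n ^ 2) atTop (nhds 0)) :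
    Tendsto (fun n : ℕ => ∫ ω, (∑ i : Fin n,
        ((f (x n i.castSucc) + ε n i.castSucc ω + (f (x n i.succ) + ε n i.succ ω)) / 2) *
          (x n i.succ - x n i.castSucc) -
      ∑ i : Fin n,
        ((f (x n i.castSucc) + f (x n i.succ)) / 2) * (x n i.succ - x n i.castSucc)) ^ 2)
      atTop (nhds 0) := by
  have hbound : ∀ n, 1 ≤ n → ∫ ω, (∑ i : Fin n,
        ((f (x n i.castSucc) + ε n i.castSucc ω + (f (x n i.succ) + ε n i.succ ω)) / 2) *
          (x n i.succ - x n i.castSucc) -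
      ∑ i : Fin n,
        ((f (x n i.castSucc) + f (x n i.succ)) / 2) * (x n i.succ - x n i.castSucc)) ^ 2 ≤
      σ ^ 2 * (n * lam n ^ 2) := fun n hn => by
    convert integral_sq_trapezoidSum_le (hmono n hn).monotone
      (fun i => (hlam n hn).symm ▸ Finset.le_sup' _ (Finset.mem_univ i))
      (hmem n) (hindep n) (hmean n) (hvar n) using 3 with ω
    exact congrArg (· ^ 2) (trapezoidSum_add_sub (x n) (fun j => f (x n j)) (fun j => ε n j ω))
  refine squeeze_zero' (.of_forall fun n => integral_nonneg fun ω => sq_nonneg _)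
    ((eventually_ge_atTop 1).mono hbound) ?_
  simpa using hmesh.const_mul (σ ^ 2)

/-- Consistency of the trapezoidal estimator: for a sequence of partitions
`a = x₀⁽ⁿ⁾ < ⋯ < x_n⁽ⁿ⁾ = b` with mesh `λ(n)`, and errored data
`φ_i⁽ⁿ⁾ = f(x_i⁽ⁿ⁾) + ε_i⁽ⁿ⁾` with independent zero-mean `L²` errors of variance `σ²`,
if `n·λ(n)² → 0` then `E[(T_n(φ) − T_n(f))²] → 0`. -/
theorem trapezoid_consistent {Ω : Type*} [MeasureSpace Ω]
    [IsProbabilityMeasure (volume : Measure Ω)]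
    (a b : ℝ) (f : ℝ → ℝ) (σ : ℝ)
    (x : (n : ℕ) → Fin (n + 1) → ℝ)
    (hmono : ∀ n, 1 ≤ n → StrictMono (x n))
    (ha : ∀ n, 1 ≤ n → x n 0 = a) (hb : ∀ n, 1 ≤ n → x n (Fin.last n) = b)
    (ε : (n : ℕ) → Fin (n + 1) → Ω → ℝ)
    (hmem : ∀ n i, MemLp (ε n i) 2)
    (hindep : ∀ n, iIndepFun (ε n))
    (hmean : ∀ n i, ∫ ω, ε n i ω = 0)
    (hvar : ∀ n i, variance (ε n i) volume = σ ^ 2)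
    (lam : ℕ → ℝ)
    (hlam : ∀ n (hn : 0 < n), lam n =
      Finset.univ.sup' (Finset.univ_nonempty_iff.mpr ⟨⟨0, hn⟩⟩)
        fun i : Fin n => x n i.succ - x n i.castSucc)
    (hmesh : Tendsto (fun n : ℕ => (n : ℝ) * lam n ^ 2) atTop (nhds 0)) :
    Tendsto (fun n : ℕ => ∫ ω, (∑ i : Fin n,
        ((f (x n i.castSucc) + ε n i.castSucc ω + (f (x n i.succ) + ε n i.succ ω)) / 2) *
          (x n i.succ - x n i.castSucc) -
      ∑ i : Fin n,
        ((f (x n i.castSucc) + f (x n i.succ)) / 2) * (x n i.succ - x n i.castSucc)) ^ 2)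
      atTop (nhds 0) :=
  trapezoid_consistent_general f σ x hmono ε hmem hindep hmean hvar lam hlam hmesh
end
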